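/- arXiv:2401.06988 — 4 statements merged into one kernel-verified Lean document; each statement's English description precedes it below -/
import Mathlib

section
/- Stochasticity of the Γ-weights: For every x ∈ ℂ with 1 − s·x ≠ 0, every vector I ∈ ℕ^{2n}, and every color j ∈ {0} ∪ [±n], the sum over ℓ ∈ {0} ∪ [±n] such that K := I + e_j − e_ℓ has all entries nonnegative of L_x(I, j, K, ℓ) equals 1. -/
open scoped BigOperators

/-- The set of colors `{0} ∪ [±n]`, encoded as `Fin (2*n+1)`:
index `i < n` is the positive color `i+1`, index `n` is the color `0`,
and index `k > n` is the negative color `\overline{2*n+1-k}`.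
The order on `Fin (2*n+1)` is exactly the color order
`1 < ⋯ < n < 0 < n̄ < ⋯ < 1̄`. -/
abbrev Col (n : ℕ) := Fin (2*n+1)

/-- The color `0` (identified with the `+` spin). -/
def mid (n : ℕ) : Col n := ⟨n, by omega⟩

/-- The bar involution `i ↦ ī` on colors (fixing `0`). -/
def barC (n : ℕ) (c : Col n) : Col n := ⟨2*n - c.val, by omega⟩

/-- The positive color `i+1` attached to `i : Fin n`. -/
def posC (n : ℕ) (i : Fin n) : Col n := ⟨i.val, by have := i.isLt; omega⟩

/-- Vectors `I ∈ ℕ^{2n}` indexed by the colors `[±n]` (the entry at the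
color `0` is irrelevant/always `0`). -/
abbrev Vec (n : ℕ) := Col n → ℕ

/-- `e_j`: the standard basis vector for `j ∈ [±n]`, and `e_0 = 0`. -/
def eV (n : ℕ) (c : Col n) : Vec n := fun k => if c ≠ mid n ∧ k = c then 1 else 0

/-- `I_{[1,n]}`. -/
def sLo (n : ℕ) (I : Vec n) : ℕ := ∑ k ∈ Finset.univ.filter (fun k : Col n => k < mid n), I k
/-- `I_{[n̄,1̄]}`. -/
def sHi (n : ℕ) (I : Vec n) : ℕ := ∑ k ∈ Finset.univ.filter (fun k : Col n => mid n < k), I k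
/-- `I_{≤ l}`. -/
def sLe (n : ℕ) (I : Vec n) (l : Col n) : ℕ := ∑ k ∈ Finset.univ.filter (fun k : Col n => k ≤ l), I k
/-- `I_{< l}`. -/
def sLt (n : ℕ) (I : Vec n) (l : Col n) : ℕ := ∑ k ∈ Finset.univ.filter (fun k : Col n => k < l), I k
/-- `I_{> l}`. -/
def sGt (n : ℕ) (I : Vec n) (l : Col n) : ℕ := ∑ k ∈ Finset.univ.filter (fun k : Col n => l < k), I k
/-- `I_{≥ l}`. -/
def sGe (n : ℕ) (I : Vec n) (l : Col n) : ℕ := ∑ k ∈ Finset.univ.filter (fun k : Col n => l ≤ k), I k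

/-- The Boltzmann weight `L_x(I, j, K, ℓ)` of a Γ vertex (Table 2.1). -/
noncomputable def LW (n : ℕ) (q s x : ℂ) (I : Vec n) (j : Col n) (K : Vec n) (l : Col n) : ℂ :=
  if ∀ k, I k + eV n j k = K k + eV n l k then
    if j = l then
      if l = mid n then (q ^ (-(sLo n I : ℤ)) - s * x * q ^ (sHi n I : ℤ)) / (1 - s * x)
      else if l < mid n then (s * q ^ (I l : ℤ) - x) * q ^ (-(sLe n I l : ℤ)) / (s * (1 - s * x))
      else s * (s * q ^ (I l : ℤ) - x) * q ^ (sGt n I l : ℤ) / (1 - s * x)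
    else if j < l then
      if l = mid n then (x * q ^ (-(sLo n I : ℤ)) - s ^ 2 * x * q ^ (sHi n I : ℤ)) / (s * (1 - s * x))
      else if l < mid n then -x * (1 - q ^ (I l : ℤ)) * q ^ (-(sLe n I l : ℤ)) / (s * (1 - s * x))
      else -(s * x) * (1 - q ^ (I l : ℤ)) * q ^ (sGt n I l : ℤ) / (1 - s * x)
    else
      if l = mid n then (q ^ (-(sLo n I : ℤ)) - s ^ 2 * q ^ (sHi n I : ℤ)) / (1 - s * x)
      else if l < mid n then -(1 - q ^ (I l : ℤ)) * q ^ (-(sLe n I l : ℤ)) / (1 - s * x)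
      else -(s ^ 2) * (1 - q ^ (I l : ℤ)) * q ^ (sGt n I l : ℤ) / (1 - s * x)
  else 0

/-! Index the gaps between consecutive colors by `t ∈ [0, 2n+1]`, gap `t` lying just before the
color of index `t`. The weight of an exit color `ℓ` is the discrete difference
`(G ℓ - G (ℓ+1)) / (1 - s x)` of a potential `G` on gaps: up to the color `0` it is
`c_t q^{-I_{<t}}`, beyond it `c_t q^{I_{≥t}}`, where the constant `c_t` only depends on whether the
gap lies before or after the entry color `j` and before or after `0`. A blocked color `ℓ`
(`ℓ ≠ 0, j` and `I_ℓ = 0`) has weight `0`, but then `G` does not change across it either.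
Hence the sum telescopes to `(G 0 - G (2n+1)) / (1 - s x) = (1 - s x) / (1 - s x)`. -/

section PartialSums

variable {M : Type*} [AddCommMonoid M] {m : ℕ} (f : Fin m → M)

def prefixSum (t : ℕ) : M := ∑ k ∈ Finset.univ.filter (fun k : Fin m => k.val < t), f k

def suffixSum (t : ℕ) : M := ∑ k ∈ Finset.univ.filter (fun k : Fin m => t ≤ k.val), f k

@[simp]
lemma prefixSum_zero : prefixSum f 0 = 0 := by
  simp [prefixSum]

lemma suffixSum_of_le {t : ℕ} (ht : m ≤ t) : suffixSum f t = 0 :=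
  Finset.sum_eq_zero fun k hk => by
    have := k.isLt
    simp only [Finset.mem_filter, Finset.mem_univ, true_and] at hk
    omega

lemma prefixSum_succ (k : Fin m) : prefixSum f (k.val + 1) = prefixSum f k.val + f k := by
  have : Finset.univ.filter (fun i : Fin m => i.val < k.val + 1) =
      insert k (Finset.univ.filter (fun i : Fin m => i.val < k.val)) := by
    ext i
    simp only [Finset.mem_filter, Finset.mem_univ, true_and, Finset.mem_insert, Fin.ext_iff]
    omega
  rw [prefixSum, this, Finset.sum_insert (by simp), add_comm, prefixSum]

lemma suffixSum_eq_add_succ (k : Fin m) : suffixSum f k.val = f k + suffixSum f (k.val + 1) := by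
  have : Finset.univ.filter (fun i : Fin m => k.val ≤ i.val) =
      insert k (Finset.univ.filter (fun i : Fin m => k.val + 1 ≤ i.val)) := by
    ext i
    simp only [Finset.mem_filter, Finset.mem_univ, true_and, Finset.mem_insert, Fin.ext_iff]
    omega
  rw [suffixSum, this, Finset.sum_insert (by simp), suffixSum]

end PartialSums

section Stochasticity

variable {n : ℕ} (I : Vec n)

lemma sLo_eq_prefixSum : sLo n I = prefixSum I n := rfl

lemma sHi_eq_suffixSum : sHi n I = suffixSum I (n + 1) := rfl

lemma sLe_eq_prefixSum (l : Col n) : sLe n I l = prefixSum I (l.val + 1) := by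
  unfold sLe prefixSum
  congr 1
  ext k
  simp only [Finset.mem_filter, Finset.mem_univ, true_and, Fin.le_def]
  omega

lemma sGt_eq_suffixSum (l : Col n) : sGt n I l = suffixSum I (l.val + 1) := rfl

noncomputable def gammaPotential (q s x : ℂ) (j : Col n) (t : ℕ) : ℂ :=
  if t ≤ n then (if t ≤ j.val then 1 else x / s) * (q ^ prefixSum I t)⁻¹
  else (if t ≤ j.val then s ^ 2 else s * x) * q ^ suffixSum I t

variable {q s x : ℂ} {j : Col n}

lemma gammaPotential_of_le {t : ℕ} (ht : t ≤ n) :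
    gammaPotential I q s x j t = (if t ≤ j.val then 1 else x / s) * (q ^ prefixSum I t)⁻¹ :=
  if_pos ht

lemma gammaPotential_of_lt {t : ℕ} (ht : n < t) :
    gammaPotential I q s x j t = (if t ≤ j.val then s ^ 2 else s * x) * q ^ suffixSum I t :=
  if_neg ht.not_ge

lemma gammaPotential_zero : gammaPotential I q s x j 0 = 1 := by
  simp [gammaPotential_of_le]

lemma gammaPotential_top : gammaPotential I q s x j (2 * n + 1) = s * x := by
  rw [gammaPotential_of_lt I (by omega), if_neg (by omega), suffixSum_of_le I le_rfl, pow_zero,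
    mul_one]

lemma sum_gammaPotential_sub :
    ∑ l : Col n, (gammaPotential I q s x j l - gammaPotential I q s x j (l + 1)) = 1 - s * x := by
  rw [Fin.sum_univ_eq_sum_range (fun t => gammaPotential I q s x j t -
    gammaPotential I q s x j (t + 1)), Finset.sum_range_sub', gammaPotential_zero,
    gammaPotential_top]

lemma not_admissible_iff {l : Col n} :
    (¬ ∀ k, eV n l k ≤ I k + eV n j k) ↔ l ≠ mid n ∧ l ≠ j ∧ I l = 0 := by
  constructor
  · intro h
    push Not at h
    obtain ⟨k, hk⟩ := h
    simp only [eV] at hk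
    split_ifs at hk <;> grind
  · rintro ⟨hlm, hlj, hI⟩ h
    simpa [eV, hlm, hlj, hI] using h l

lemma gammaPotential_succ_of_not_admissible {l : Col n}
    (hl : ¬ ∀ k, eV n l k ≤ I k + eV n j k) :
    gammaPotential I q s x j (l + 1) = gammaPotential I q s x j l := by
  obtain ⟨hlm, hlj, hI⟩ := (not_admissible_iff I).1 hl
  have hlj' : l.val ≠ j.val := Fin.val_ne_of_ne hlj
  rcases lt_or_gt_of_ne (Fin.val_ne_of_ne hlm) with hln | hln
  · rw [gammaPotential_of_le I hln, gammaPotential_of_le I hln.le, prefixSum_succ, hI, add_zero]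
    simp only [mid] at hln
    split_ifs <;> first | omega | rfl
  · rw [gammaPotential_of_lt I (hln.trans (Nat.lt_succ_self _)), gammaPotential_of_lt I hln,
      suffixSum_eq_add_succ I l, hI, zero_add]
    simp only [mid] at hln
    split_ifs <;> first | omega | rfl

lemma LW_eq_zero_of_not_admissible {l : Col n} (hl : ¬ ∀ k, eV n l k ≤ I k + eV n j k) :
    LW n q s x I j (fun k => I k + eV n j k - eV n l k) l = 0 := by
  refine if_neg fun hK => hl fun k => ?_
  have := hK k
  omega

lemma LW_eq_gammaPotential_sub_of_admissible (hq : q ≠ 0) (hs : s ≠ 0) (hsx : 1 - s * x ≠ 0)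
    {l : Col n} (hl : ∀ k, eV n l k ≤ I k + eV n j k) :
    LW n q s x I j (fun k => I k + eV n j k - eV n l k) l
      = (gammaPotential I q s x j l - gammaPotential I q s x j (l + 1)) / (1 - s * x) := by
  have hK : ∀ k, I k + eV n j k = (I k + eV n j k - eV n l k) + eV n l k :=
    fun k => (Nat.sub_add_cancel (hl k)).symm
  rw [LW, if_pos hK]
  rcases lt_trichotomy l (mid n) with hlm | rfl | hlm
  · have hln : l.val < n := hlm
    simp only [hlm, hlm.ne, if_true, if_false, sLe_eq_prefixSum, prefixSum_succ,
      gammaPotential_of_le I hln.le, gammaPotential_of_le I hln, zpow_neg, zpow_natCast, pow_add,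
      Fin.lt_def, Fin.ext_iff]
    split_ifs <;> first | omega | (field_simp <;> ring)
  · simp only [if_true, sLo_eq_prefixSum, sHi_eq_suffixSum, gammaPotential_of_le I le_rfl,
      gammaPotential_of_lt I (Nat.lt_succ_self n), zpow_neg, zpow_natCast, Fin.lt_def,
      Fin.ext_iff, mid]
    split_ifs <;> first | omega | field_simp
  · have hln : n < l.val := hlm
    simp only [hlm.ne', hlm.not_gt, if_false, sGt_eq_suffixSum, suffixSum_eq_add_succ I l,
      gammaPotential_of_lt I hln, gammaPotential_of_lt I (hln.trans (Nat.lt_succ_self _)),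
      zpow_natCast, pow_add, Fin.lt_def, Fin.ext_iff]
    split_ifs <;> first | omega | (field_simp <;> ring)

lemma LW_eq_gammaPotential_sub (hq : q ≠ 0) (hs : s ≠ 0) (hsx : 1 - s * x ≠ 0) (l : Col n) :
    LW n q s x I j (fun k => I k + eV n j k - eV n l k) l
      = (gammaPotential I q s x j l - gammaPotential I q s x j (l + 1)) / (1 - s * x) := by
  by_cases hl : ∀ k, eV n l k ≤ I k + eV n j k
  · exact LW_eq_gammaPotential_sub_of_admissible I hq hs hsx hl
  · rw [LW_eq_zero_of_not_admissible I hl, gammaPotential_succ_of_not_admissible I hl, sub_self,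
      zero_div]

end Stochasticity

theorem gamma_weights_stochastic_general (n : ℕ) (q s x : ℂ)
    (hq : q ≠ 0) (hs : s ≠ 0) (hsx : 1 - s * x ≠ 0)
    (I : Vec n) (j : Col n) :
    ∑ l ∈ Finset.univ.filter (fun l : Col n => ∀ k, eV n l k ≤ I k + eV n j k),
      LW n q s x I j (fun k => I k + eV n j k - eV n l k) l = 1 := by
  rw [Finset.sum_subset (Finset.subset_univ _) fun l _ hl =>
      LW_eq_zero_of_not_admissible I (by simpa using hl)]
  simp_rw [LW_eq_gammaPotential_sub I hq hs hsx, ← Finset.sum_div, sum_gammaPotential_sub]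
  exact div_self hsx

/-- stochasticity of the Γ-weights: for every `x` with
`1 - s·x ≠ 0`, every `I ∈ ℕ^{2n}` and every color `j`, the sum of
`L_x(I, j, K, ℓ)` over all colors `ℓ` such that `K := I + e_j - e_ℓ` has
nonnegative entries equals `1`. -/
theorem gamma_weights_stochastic (n : ℕ) (hn : 0 < n) (q s x : ℂ)
    (hq : q ≠ 0) (hs : s ≠ 0) (hsx : 1 - s * x ≠ 0)
    (I : Vec n) (j : Col n) :
    ∑ l ∈ Finset.univ.filter (fun l : Col n => ∀ k, eV n l k ≤ I k + eV n j k),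
      LW n q s x I j (fun k => I k + eV n j k - eV n l k) l = 1 :=
  gamma_weights_stochastic_general n q s x hq hs hsx I j
end

section
/- Stochasticity of the Δ-weights: For every x ∈ ℂ with 1 − s·x ≠ 0, every vector I ∈ ℕ^{2n}, and every color j ∈ {0} ∪ [±n], the sum over ℓ ∈ {0} ∪ [±n] such that K := I + e_j − e_ℓ has all entries nonnegative of M_x(I, j, K, ℓ) equals 1. -/
open scoped BigOperators

/-- The Boltzmann weight `M_x(I, j, K, ℓ)` of a Δ vertex (Table 2.2). -/
noncomputable def MW (n : ℕ) (q s x : ℂ) (I : Vec n) (j : Col n) (K : Vec n) (l : Col n) : ℂ :=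
  if ∀ k, I k + eV n j k = K k + eV n l k then
    if j = l then
      if l = mid n then (q ^ (-(sHi n I : ℤ)) - s * x * q ^ (sLo n I : ℤ)) / (1 - s * x)
      else if l < mid n then s * (s * q ^ (I l : ℤ) - x) * q ^ (sLt n I l : ℤ) / (1 - s * x)
      else (1 - s⁻¹ * x * q ^ (-(I l : ℤ))) * q ^ (-(sGt n I l : ℤ)) / (1 - s * x)
    else if j < l then
      if l = mid n then (q ^ (-(sHi n I : ℤ)) - s ^ 2 * q ^ (sLo n I : ℤ)) / (1 - s * x)
      else if l < mid n then -(s ^ 2) * (1 - q ^ (I l : ℤ)) * q ^ (sLt n I l : ℤ) / (1 - s * x)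
      else -(1 - q ^ (I l : ℤ)) * q ^ (-(sGe n I l : ℤ)) / (1 - s * x)
    else
      if l = mid n then x * (s⁻¹ * q ^ (-(sHi n I : ℤ)) - s * q ^ (sLo n I : ℤ)) / (1 - s * x)
      else if l < mid n then -(s * x) * (1 - q ^ (I l : ℤ)) * q ^ (sLt n I l : ℤ) / (1 - s * x)
      else -(s⁻¹ * x) * (1 - q ^ (I l : ℤ)) * q ^ (-(sGe n I l : ℤ)) / (1 - s * x)
  else 0

/-!
The weights telescope. For a cut `v ∈ {0, …, 2n+1}` of the colour sequence (just before the
colour of index `v` in `Col n`) put `Φ(v) = a_v q^{I_{<v}}` for `v ≤ n` and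
`Φ(v) = b_v q^{-I_{≥v}}` for `v > n`, where `(a_v, b_v) = (s x, s⁻¹ x)` while `v ≤ j` and
`(s², 1)` afterwards. Every Δ-weight `M_x(I, j, K, ℓ)` equals `(Φ(ℓ+1) - Φ(ℓ)) / (1 - s x)`, and
for the colours `ℓ` excluded from the sum (`I_ℓ = 0`, `ℓ ≠ j`, `ℓ ≠ 0`) this difference vanishes.
Hence the sum is `(Φ(2n+1) - Φ(0)) / (1 - s x) = (1 - s x) / (1 - s x)`.
-/

namespace DeltaWeights

open Finset

variable {n : ℕ}

def sumBelow (I : Vec n) (c : ℕ) : ℕ := ∑ k ∈ univ.filter (fun k : Col n => k.val < c), I k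

def sumFrom (I : Vec n) (c : ℕ) : ℕ := ∑ k ∈ univ.filter (fun k : Col n => c ≤ k.val), I k

section Sums

variable (I : Vec n) (l : Col n)

theorem sLt_eq_sumBelow : sLt n I l = sumBelow I l := rfl

theorem sLo_eq_sumBelow : sLo n I = sumBelow I n := rfl

theorem sGe_eq_sumFrom : sGe n I l = sumFrom I l := rfl

theorem sGt_eq_sumFrom : sGt n I l = sumFrom I (l + 1) := rfl

theorem sHi_eq_sumFrom : sHi n I = sumFrom I (n + 1) := rfl

theorem sumBelow_zero : sumBelow I 0 = 0 := by
  simp [sumBelow]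

theorem sumFrom_top : sumFrom I (2 * n + 1) = 0 := by
  simp only [sumFrom]
  exact sum_eq_zero fun k hk => absurd k.isLt (by simpa using hk)

theorem sumBelow_succ : sumBelow I (l + 1) = sumBelow I l + I l := by
  have hsplit : univ.filter (fun k : Col n => k.val < l + 1)
      = insert l (univ.filter (fun k : Col n => k.val < l)) := by
    ext k; simp only [mem_filter, mem_univ, true_and, mem_insert, Fin.ext_iff]; omega
  rw [sumBelow, hsplit, sum_insert (by simp), add_comm, sumBelow]

theorem sumFrom_eq_add_sumFrom_succ : sumFrom I l = I l + sumFrom I (l + 1) := by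
  have hsplit : univ.filter (fun k : Col n => l.val ≤ k.val)
      = insert l (univ.filter (fun k : Col n => l.val + 1 ≤ k.val)) := by
    ext k; simp only [mem_filter, mem_univ, true_and, mem_insert, Fin.ext_iff]; omega
  rw [sumFrom, hsplit, sum_insert (by simp), sumFrom]

end Sums

noncomputable def potential (q s x : ℂ) (I : Vec n) (J v : ℕ) : ℂ :=
  if v ≤ n then (if v ≤ J then s * x else s ^ 2) * q ^ sumBelow I v
  else (if v ≤ J then s⁻¹ * x else 1) * (q ^ sumFrom I v)⁻¹

section Potential

variable {q s x : ℂ} (I : Vec n)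

theorem potential_zero (J : ℕ) : potential q s x I J 0 = s * x := by
  simp [potential, sumBelow_zero]

theorem potential_top {J : ℕ} (hJ : J < 2 * n + 1) : potential q s x I J (2 * n + 1) = 1 := by
  rw [potential, if_neg (by omega), if_neg (by omega), sumFrom_top]
  simp

variable {I} {j l : Col n}

theorem MW_eq_potential_sub (hq : q ≠ 0) (h : ∀ k, eV n l k ≤ I k + eV n j k) :
    MW n q s x I j (fun k => I k + eV n j k - eV n l k) l
      = (potential q s x I j (l + 1) - potential q s x I j l) / (1 - s * x) := by
  have hcons : ∀ k, I k + eV n j k = (I k + eV n j k - eV n l k) + eV n l k :=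
    fun k => (Nat.sub_add_cancel (h k)).symm
  rw [MW, if_pos hcons]
  simp only [potential, sLt_eq_sumBelow, sLo_eq_sumBelow, sGe_eq_sumFrom, sGt_eq_sumFrom,
    sHi_eq_sumFrom, Fin.ext_iff, Fin.lt_def, mid, zpow_neg, zpow_natCast]
  rcases eq_or_ne (l : ℕ) n with hmid | hmid
  · simp only [hmid]
    split_ifs <;> first | omega | ring
  · have hIl : q ^ I l ≠ 0 := pow_ne_zero _ hq
    rw [sumBelow_succ, sumFrom_eq_add_sumFrom_succ I l, pow_add, pow_add, mul_inv]
    split_ifs <;> first | omega | (field_simp <;> ring)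

theorem potential_succ_of_ne (hl : (l : ℕ) ≠ n) (hjl : j ≠ l) (hI : I l = 0) :
    potential q s x I j (l + 1) = potential q s x I j l := by
  have hjl' : (j : ℕ) ≠ l := Fin.val_ne_of_ne hjl
  have hBelow : sumBelow I (l + 1) = sumBelow I l := by rw [sumBelow_succ, hI, add_zero]
  have hFrom : sumFrom I l = sumFrom I (l + 1) := by rw [sumFrom_eq_add_sumFrom_succ, hI, zero_add]
  simp only [potential, hBelow, hFrom]
  split_ifs <;> first | omega | rfl

end Potential

theorem ne_mid_and_eq_zero_of_not_eV_le {I : Vec n} {j l : Col n}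
    (h : ¬ ∀ k, eV n l k ≤ I k + eV n j k) : l ≠ mid n ∧ j ≠ l ∧ I l = 0 := by
  obtain ⟨k, hk⟩ := not_forall.1 h
  by_cases hl : l ≠ mid n ∧ k = l
  · obtain ⟨hlm, rfl⟩ := hl
    have hjk : ¬ (j ≠ mid n ∧ k = j) := fun hj => by simp [eV, hj.1, hj.2] at hk
    simp only [eV, hlm, and_self, ne_eq, not_false_eq_true, if_true, hjk, if_false] at hk
    exact ⟨hlm, fun hjl => hjk ⟨hjl ▸ hlm, hjl.symm⟩, by omega⟩
  · simp [eV, hl] at hk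

theorem MW_ite_eq_potential_sub {q s x : ℂ} (hq : q ≠ 0) (I : Vec n) (j l : Col n) :
    (if ∀ k, eV n l k ≤ I k + eV n j k then
        MW n q s x I j (fun k => I k + eV n j k - eV n l k) l else 0)
      = (potential q s x I j (l + 1) - potential q s x I j l) / (1 - s * x) := by
  split_ifs with h
  · exact MW_eq_potential_sub hq h
  · obtain ⟨hl, hjl, hI⟩ := ne_mid_and_eq_zero_of_not_eV_le h
    rw [potential_succ_of_ne (fun h => hl (Fin.ext h)) hjl hI, sub_self, zero_div]

theorem sum_potential_sub {q s x : ℂ} (I : Vec n) (j : Col n) :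
    ∑ l : Col n, (potential q s x I j (l + 1) - potential q s x I j l) = 1 - s * x := by
  rw [Fin.sum_univ_eq_sum_range (fun v => potential q s x I j (v + 1) - potential q s x I j v),
    sum_range_sub, potential_top I j.isLt, potential_zero]

end DeltaWeights

theorem delta_weights_stochastic_general (n : ℕ) (q s x : ℂ)
    (hq : q ≠ 0) (hsx : 1 - s * x ≠ 0)
    (I : Vec n) (j : Col n) :
    ∑ l ∈ Finset.univ.filter (fun l : Col n => ∀ k, eV n l k ≤ I k + eV n j k),
      MW n q s x I j (fun k => I k + eV n j k - eV n l k) l = 1 := by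
  rw [Finset.sum_filter,
    Finset.sum_congr rfl fun l _ => DeltaWeights.MW_ite_eq_potential_sub hq I j l,
    ← Finset.sum_div, DeltaWeights.sum_potential_sub, div_self hsx]

/-- stochasticity of the Δ-weights: for every `x` with
`1 - s·x ≠ 0`, every `I ∈ ℕ^{2n}` and every color `j`, the sum of
`M_x(I, j, K, ℓ)` over all colors `ℓ` such that `K := I + e_j - e_ℓ` has
nonnegative entries equals `1`. -/
theorem delta_weights_stochastic (n : ℕ) (hn : 0 < n) (q s x : ℂ)
    (hq : q ≠ 0) (hs : s ≠ 0) (hsx : 1 - s * x ≠ 0)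
    (I : Vec n) (j : Col n) :
    ∑ l ∈ Finset.univ.filter (fun l : Col n => ∀ k, eV n l k ≤ I k + eV n j k),
      MW n q s x I j (fun k => I k + eV n j k - eV n l k) l = 1 :=
  delta_weights_stochastic_general n q s x hq hsx I j
end

section
/- Local cap-decomposition identity (equation (3.12) in the paper): Fix R ∈ [n] and x_n ∈ ℂ (with all denominators nonzero). For all colors ε₁, ε₂ ∈ {0} ∪ [±n], W(ε₁, ε₂) = [ ((1−q)x_n²/(x_n²−q)) − ((x_n²−1)/(x_n²−q))·(1 − tφ(q^{−1/2}x_n^{−1})) ]·W₁(ε₁, ε₂) − ( q(x_n²−1)·tφ(q^{−1/2}x_n^{−1})/(x_n²−q) )·W₂(ε₁, ε₂), where W(ε₁, ε₂) := Σ over δ_t, δ_b ∈ {0}∪[±n] of R_{ΔΔ}(ε₁, ε₂, δ_t, δ_b; x_n^{−1}, x_n) · N(δ_b → δ_t), W₁(ε₁, ε₂) := C₁(ε₁ → ε₂), and W₂(ε₁, ε₂) := C₂(ε₁ → ε₂). -/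
open scoped BigOperators

/-- `φ(z) = (1-z²)/((1-νtz)(1+ν⁻¹z))`. -/
noncomputable def phiF (ν t z : ℂ) : ℂ := (1 - z ^ 2) / ((1 - ν * t * z) * (1 + ν⁻¹ * z))

/-- The cap vertex Boltzmann weight `Cap_x(ε → ε')` (Figure 2.3), where `ε` is
the incoming bottom color and `ε'` the outgoing top color, and `qh` denotes the
fixed branch of `q^{-1/2}`. -/
noncomputable def capW (n : ℕ) (ν t qh x : ℂ) (ε ε' : Col n) : ℂ :=
  if ε = mid n ∧ ε' = mid n then 1
  else if ε < mid n ∧ ε' = barC n ε then t * phiF ν t (qh * x⁻¹)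
  else if ε < mid n ∧ ε' = ε then 1 - t * phiF ν t (qh * x⁻¹)
  else if mid n < ε ∧ ε' = barC n ε then phiF ν t (qh * x⁻¹)
  else if mid n < ε ∧ ε' = ε then 1 - phiF ν t (qh * x⁻¹)
  else 0

/-- The `Δ-Δ` R-weight `R_{ΔΔ}(α,β,γ,δ; x,y)` (Figure 2.6); positions:
`α` bottom-left, `β` top-left, `γ` top-right, `δ` bottom-right. -/
noncomputable def RDD (n : ℕ) (q x y : ℂ) (α β γ δ : Col n) : ℂ :=
  if α = β ∧ β = γ ∧ γ = δ then 1
  else if α = γ ∧ β = δ ∧ α < β then (y - x) / (y - q * x)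
  else if α = γ ∧ β = δ ∧ β < α then q * (y - x) / (y - q * x)
  else if α = δ ∧ β = γ ∧ β < α then (1 - q) * x / (y - q * x)
  else if α = δ ∧ β = γ ∧ α < β then (1 - q) * y / (y - q * x)
  else 0

/-- The modified cap weight `N` of the proof of Theorem 3.3: its only nonzero
entries (bottom `ε` → top `ε'`) are `N(R → 0) = -1`,
`N(0 → R̄) = tφ(q^{-1/2}x_n^{-1})` and `N(0 → R) = 1 - tφ(q^{-1/2}x_n^{-1})`. -/
noncomputable def Ncap (n : ℕ) (ν t qh xn : ℂ) (R : Col n) (ε ε' : Col n) : ℂ :=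
  if ε = R ∧ ε' = mid n then -1
  else if ε = mid n ∧ ε' = barC n R then t * phiF ν t (qh * xn⁻¹)
  else if ε = mid n ∧ ε' = R then 1 - t * phiF ν t (qh * xn⁻¹)
  else 0

/-- The auxiliary cap weight `C₁` (Figure: FishC5): nonzero entries
`C₁(R → 0) = -1`, `C₁(0 → R̄) = tφ(q^{-1/2}x_n)`,
`C₁(0 → R) = 1 - tφ(q^{-1/2}x_n)`. -/
noncomputable def C1cap (n : ℕ) (ν t qh xn : ℂ) (R : Col n) (ε ε' : Col n) : ℂ :=
  if ε = R ∧ ε' = mid n then -1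
  else if ε = mid n ∧ ε' = barC n R then t * phiF ν t (qh * xn)
  else if ε = mid n ∧ ε' = R then 1 - t * phiF ν t (qh * xn)
  else 0

/-- The auxiliary cap weight `C₂` (Figure: FishC6): nonzero entries
`C₂(R̄ → 0) = -1`, `C₂(0 → R̄) = 1 - φ(q^{-1/2}x_n)`,
`C₂(0 → R) = φ(q^{-1/2}x_n)`. -/
noncomputable def C2cap (n : ℕ) (ν t qh xn : ℂ) (R : Col n) (ε ε' : Col n) : ℂ :=
  if ε = barC n R ∧ ε' = mid n then -1
  else if ε = mid n ∧ ε' = barC n R then 1 - phiF ν t (qh * xn)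
  else if ε = mid n ∧ ε' = R then phiF ν t (qh * xn)
  else 0

/-!
Only three entries of `N` are nonzero, so `W(ε₁, ε₂)` is a combination of three `R`-weights; it
vanishes unless `(ε₁, ε₂)` is one of the four color pairs carrying `C₁` or `C₂`. On `(R, 0)` and
`(R̄, 0)` the identity is rational arithmetic in `xn` and `q`. On `(0, R̄)` and `(0, R)` (where the
two discrepancies are negatives of each other) it reduces to one relation between
`φ(q^{-1/2}xn⁻¹)` and `φ(q^{-1/2}xn)`: the case `u = qh/xn`, `v = qh·xn` of
`u(v²-1)φ(u) + v(1-u²)φ(v) = (v-u)(1+tuv)φ(u)φ(v)`, which holds because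
`(1-z²)/φ(z) = (1-νtz)(1+ν⁻¹z)` is a quadratic in `z` with constant term `1` and `z²`-coefficient `-t`.
-/

lemma phiF_cross_relation {ν t u v : ℂ} (hν : ν ≠ 0)
    (hu₁ : 1 - ν * t * u ≠ 0) (hu₂ : 1 + ν⁻¹ * u ≠ 0)
    (hv₁ : 1 - ν * t * v ≠ 0) (hv₂ : 1 + ν⁻¹ * v ≠ 0) :
    u * (v ^ 2 - 1) * phiF ν t u + v * (1 - u ^ 2) * phiF ν t v
      = (v - u) * (1 + t * u * v) * phiF ν t u * phiF ν t v := by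
  have hψ : v * ((1 - ν * t * u) * (1 + ν⁻¹ * u)) - u * ((1 - ν * t * v) * (1 + ν⁻¹ * v))
      = (v - u) * (1 + t * u * v) := by
    field_simp
    ring
  have hA := mul_ne_zero hu₁ hu₂
  have hB := mul_ne_zero hv₁ hv₂
  unfold phiF
  generalize (1 - ν * t * u) * (1 + ν⁻¹ * u) = A at *
  generalize (1 - ν * t * v) * (1 + ν⁻¹ * v) = B at *
  field_simp
  linear_combination (1 - u ^ 2) * (1 - v ^ 2) * hψ

lemma phiF_cross_relation_inv {ν t q qh x : ℂ} (hν : ν ≠ 0) (hqh : qh ^ 2 * q = 1) (hx : x ≠ 0)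
    (hu₁ : 1 - ν * t * (qh * x⁻¹) ≠ 0) (hu₂ : 1 + ν⁻¹ * (qh * x⁻¹) ≠ 0)
    (hv₁ : 1 - ν * t * (qh * x) ≠ 0) (hv₂ : 1 + ν⁻¹ * (qh * x) ≠ 0) :
    (x ^ 2 - q) * phiF ν t (qh * x⁻¹) + (q * x ^ 2 - 1) * phiF ν t (qh * x)
      = (x ^ 2 - 1) * (q + t) * phiF ν t (qh * x⁻¹) * phiF ν t (qh * x) := by
  have key := phiF_cross_relation hν hu₁ hu₂ hv₁ hv₂
  have hqh0 : qh ≠ 0 := by rintro rfl; simp at hqh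
  obtain rfl : q = (qh ^ 2)⁻¹ := by field_simp; linear_combination hqh
  field_simp at key ⊢
  linear_combination key

section Weights

variable {n : ℕ} {R : Col n}

lemma barC_ne_self (hR : R ≠ mid n) : barC n R ≠ R := by
  simp only [ne_eq, Fin.ext_iff, barC, mid] at hR ⊢
  omega

lemma mid_lt_barC (hR : R < mid n) : mid n < barC n R := by
  simp only [Fin.lt_def, mid, barC] at hR ⊢
  omega

lemma sum_sum_mul_Ncap (ν t qh xn : ℂ) (hR : R ≠ mid n)
    (f : Col n → Col n → ℂ) :
    ∑ δt, ∑ δb, f δt δb * Ncap n ν t qh xn R δb δt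
      = -f (mid n) R + t * phiF ν t (qh * xn⁻¹) * f (barC n R) (mid n)
        + (1 - t * phiF ν t (qh * xn⁻¹)) * f R (mid n) := by
  have hN : ∀ δb δt, Ncap n ν t qh xn R δb δt
      = (if δb = R ∧ δt = mid n then -1 else 0)
        + (if δb = mid n ∧ δt = barC n R then t * phiF ν t (qh * xn⁻¹) else 0)
        + (if δb = mid n ∧ δt = R then 1 - t * phiF ν t (qh * xn⁻¹) else 0) := by
    intro δb δt
    have := barC_ne_self hR
    unfold Ncap
    split_ifs <;> grind
  simp only [hN, ite_and, mul_add, mul_ite, mul_neg, mul_one, mul_zero, Finset.sum_add_distrib,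
    Finset.sum_ite_eq', Finset.mem_univ, ↓reduceIte]
  ring

lemma RDD_eq_zero (q x y : ℂ) {α β γ δ : Col n} (h₁ : ¬(α = γ ∧ β = δ))
    (h₂ : ¬(α = δ ∧ β = γ)) : RDD n q x y α β γ δ = 0 := by
  unfold RDD
  split_ifs <;> grind

end Weights

theorem cap_decomposition_general (n : ℕ) (q ν t qh xn : ℂ)
    (hν : ν ≠ 0) (hqh : qh ^ 2 * q = 1)
    (hxn : xn ≠ 0) (hden : xn ^ 2 - q ≠ 0)
    (hc1 : 1 - ν * t * (qh * xn⁻¹) ≠ 0) (hc2 : 1 + ν⁻¹ * (qh * xn⁻¹) ≠ 0)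
    (hc3 : 1 - ν * t * (qh * xn) ≠ 0) (hc4 : 1 + ν⁻¹ * (qh * xn) ≠ 0)
    (R : Col n) (hR : R < mid n) (ε₁ ε₂ : Col n) :
    ∑ δt : Col n, ∑ δb : Col n,
        RDD n q xn⁻¹ xn ε₁ ε₂ δt δb * Ncap n ν t qh xn R δb δt
      = ((1 - q) * xn ^ 2 / (xn ^ 2 - q)
            - (xn ^ 2 - 1) / (xn ^ 2 - q) * (1 - t * phiF ν t (qh * xn⁻¹)))
          * C1cap n ν t qh xn R ε₁ ε₂
        - (q * (xn ^ 2 - 1) * t * phiF ν t (qh * xn⁻¹) / (xn ^ 2 - q))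
          * C2cap n ν t qh xn R ε₁ ε₂ := by
  have hφ := phiF_cross_relation_inv hν hqh hxn hc1 hc2 hc3 hc4
  have hmb := mid_lt_barC hR
  have hRb := hR.trans hmb
  rw [sum_sum_mul_Ncap ν t qh xn hR.ne]
  by_cases hsupp : (ε₁ = mid n ∧ ε₂ = barC n R) ∨ (ε₁ = mid n ∧ ε₂ = R) ∨
      (ε₁ = R ∧ ε₂ = mid n) ∨ (ε₁ = barC n R ∧ ε₂ = mid n)
  · rcases hsupp with ⟨rfl, rfl⟩ | ⟨rfl, rfl⟩ | ⟨rfl, rfl⟩ | ⟨rfl, rfl⟩ <;>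
      simp [RDD, C1cap, C2cap, hR, hmb, hR.ne, hR.ne', hmb.ne, hmb.ne', hRb.ne, hRb.ne',
        hR.asymm, hmb.asymm] <;>
      generalize phiF ν t (qh * xn⁻¹) = a at * <;>
      generalize phiF ν t (qh * xn) = b at * <;>
      field_simp
    -- `field_simp` already settles `(R̄, 0)`
    · linear_combination t * hφ
    · linear_combination -t * hφ
    · ring
  · simp only [not_or] at hsupp
    obtain ⟨h₁, h₂, h₃, h₄⟩ := hsupp
    simp [RDD_eq_zero, C1cap, C2cap, h₁, h₂, h₃, h₄]

/-- the local cap-decomposition identity, equation (3.12):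
for all colors `ε₁, ε₂`,
`W(ε₁,ε₂) = [((1-q)x_n²/(x_n²-q)) - ((x_n²-1)/(x_n²-q))(1 - tφ(q^{-1/2}x_n^{-1}))]·W₁(ε₁,ε₂)
  - (q(x_n²-1)tφ(q^{-1/2}x_n^{-1})/(x_n²-q))·W₂(ε₁,ε₂)`,
where `W(ε₁,ε₂) = Σ_{δt,δb} R_{ΔΔ}(ε₁,ε₂,δt,δb; x_n^{-1},x_n)·N(δb → δt)`,
`W₁ = C₁` and `W₂ = C₂`.  Here `qh` is the fixed branch of `q^{-1/2}`. -/
theorem cap_decomposition (n : ℕ) (hn : 0 < n) (q ν t qh xn : ℂ)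
    (hq : q ≠ 0) (hν : ν ≠ 0) (hqh : qh ^ 2 * q = 1)
    (hxn : xn ≠ 0) (hden : xn ^ 2 - q ≠ 0)
    (hc1 : 1 - ν * t * (qh * xn⁻¹) ≠ 0) (hc2 : 1 + ν⁻¹ * (qh * xn⁻¹) ≠ 0)
    (hc3 : 1 - ν * t * (qh * xn) ≠ 0) (hc4 : 1 + ν⁻¹ * (qh * xn) ≠ 0)
    (R : Col n) (hR : R < mid n) (ε₁ ε₂ : Col n) :
    ∑ δt : Col n, ∑ δb : Col n,
        RDD n q xn⁻¹ xn ε₁ ε₂ δt δb * Ncap n ν t qh xn R δb δt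
      = ((1 - q) * xn ^ 2 / (xn ^ 2 - q)
            - (xn ^ 2 - 1) / (xn ^ 2 - q) * (1 - t * phiF ν t (qh * xn⁻¹)))
          * C1cap n ν t qh xn R ε₁ ε₂
        - (q * (xn ^ 2 - 1) * t * phiF ν t (qh * xn⁻¹) / (xn ^ 2 - q))
          * C2cap n ν t qh xn R ε₁ ε₂ :=
  cap_decomposition_general n q ν t qh xn hν hqh hxn hden hc1 hc2 hc3 hc4 R hR ε₁ ε₂
end

section
/- Uniqueness of the admissible state for frozen boundary conditions: Suppose σ ∈ B_n and μ ∈ {±1,…,±L}ⁿ satisfy: (a) for each i ∈ [n], σ(i) and μ_{|σ(i)|} have opposite signs (i.e., σ(i) ∈ [n] and μ_{σ(i)} < 0, or σ(i) ∈ [n̄] and μ_{|σ(i)|} > 0); and (b) |μ_{|σ(1)|}| ≥ |μ_{|σ(2)|}| ≥ ⋯ ≥ |μ_{|σ(n)|}|. Then the colored stochastic vertex model with U-turn boundary with boundary data (σ, μ) has exactly one admissible state (where the parameters q, s, ν, t, x are assumed generic, so that the weight of every vertex configuration listed as allowed in the weight tables is nonzero). -/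
open scoped BigOperators

/-- A state of the model on the `2n × L` lattice: the first component assigns a
color to each horizontal edge (row `r : Fin (2n)`, 0-indexed top to bottom, and
horizontal position `p : Fin (L+1)`, with `p = 0` the right boundary and
`p = L` the left boundary; the vertex in the paper's column `c+1` of row `r+1`
lies between positions `c` (east) and `c+1` (west)); the second component
assigns a vector in `ℕ^{2n}` to each vertical edge (level `v : Fin (2n+1)`,
with `v = 0` the top boundary and `v = 2n` the bottom boundary, and column
`c : Fin L`, 0-indexed right to left). -/
abbrev St (n L : ℕ) := (Fin (2*n) × Fin (L+1) → Col n) × (Fin (2*n+1) × Fin L → Vec n)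

/-- The vector assigned at the top of column `c` (the paper's column `c+1`):
`∑_{i=1}^n (1_{μ_i = c+1} e_i + 1_{μ_i = -(c+1)} e_{ī})`. -/
def topV (n L : ℕ) (μ : Fin n → ℤ) (c : Fin L) : Vec n := fun k =>
  ∑ i : Fin n,
    ((if μ i = (c.val : ℤ) + 1 ∧ k = posC n i then 1 else 0) +
     (if μ i = -((c.val : ℤ) + 1) ∧ k = barC n (posC n i) then 1 else 0))

/-- The boundary conditions of the model with data `(σ, μ)`: on the left, the
paper's row `2i-1` (a Δ row, 0-indexed row `2i-2`, even) carries the color `0`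
and the paper's row `2i` (a Γ row, 0-indexed row `2i-1`, odd) carries the color
`σ(i)`; at the bottom every vertical edge carries the zero vector; at the top
the vertical edge in column `c` carries `topV μ c`. -/
def BC (n L : ℕ) (σ : Equiv.Perm (Col n)) (μ : Fin n → ℤ) (st : St n L) : Prop :=
  (∀ r : Fin (2*n), st.1 (r, Fin.last L) =
      if r.val % 2 = 0 then mid n
      else σ (posC n ⟨r.val / 2, by have := r.isLt; omega⟩)) ∧
  (∀ c : Fin L, st.2 (0, c) = topV n L μ c) ∧
  (∀ c : Fin L, st.2 (Fin.last (2*n), c) = fun _ => 0)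

/-- The Boltzmann weight of a state: the product of the weights of all the
Γ, Δ and cap vertices.  Even 0-indexed rows (the paper's odd rows `2i-1`) are
rows of Δ vertices and odd 0-indexed rows (the paper's even rows `2i`) are rows
of Γ vertices, both with spectral parameter `x i`; the cap with spectral
parameter `x i` joins the right end of the paper's row `2i` (incoming, bottom)
to the right end of the paper's row `2i-1` (outgoing, top).
Here `qh` denotes the fixed branch of `q^{-1/2}`. -/
noncomputable def stWt (n L : ℕ) (q s ν t qh : ℂ) (x : Fin n → ℂ) (st : St n L) : ℂ :=
  (∏ r : Fin (2*n), ∏ c : Fin L,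
    if r.val % 2 = 0 then
      MW n q s (x ⟨r.val / 2, by have := r.isLt; omega⟩)
        (st.2 (r.succ, c)) (st.1 (r, c.castSucc)) (st.2 (r.castSucc, c)) (st.1 (r, c.succ))
    else
      LW n q s (x ⟨r.val / 2, by have := r.isLt; omega⟩)
        (st.2 (r.succ, c)) (st.1 (r, c.succ)) (st.2 (r.castSucc, c)) (st.1 (r, c.castSucc)))
  * ∏ i : Fin n,
      capW n ν t qh (x i)
        (st.1 (⟨2 * i.val + 1, by have := i.isLt; omega⟩, 0))
        (st.1 (⟨2 * i.val, by have := i.isLt; omega⟩, 0))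

/-- The partition function `f_μ^σ(x)` of the colored stochastic vertex model
with U-turn boundary: the sum of the Boltzmann weights of all states satisfying
the boundary conditions (the weight of a non-admissible state is `0`, and only
finitely many states have nonzero weight, so this is a finite sum over the
admissible states). -/
noncomputable def pf (n L : ℕ) (q s ν t qh : ℂ) (x : Fin n → ℂ)
    (σ : Equiv.Perm (Col n)) (μ : Fin n → ℤ) : ℂ :=
  ∑ᶠ st ∈ {st : St n L | BC n L σ μ st}, stWt n L q s ν t qh x st

/-- A state is admissible if at every vertex the adjacent assignment is one of
the allowed configurations of the corresponding weight table: at a Δ vertex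
(even 0-indexed row) the conservation law `S + e_E = N + e_W` holds, at a
Γ vertex (odd 0-indexed row) the conservation law `S + e_W = N + e_E` holds,
and the coloring of each cap is one of `0→0`, `i→i`, `i→ī`, `ī→i`, `ī→ī`. -/
def Adm (n L : ℕ) (st : St n L) : Prop :=
  (∀ (r : Fin (2*n)) (c : Fin L),
    if r.val % 2 = 0 then
      ∀ k, st.2 (r.succ, c) k + eV n (st.1 (r, c.castSucc)) k
            = st.2 (r.castSucc, c) k + eV n (st.1 (r, c.succ)) k
    else
      ∀ k, st.2 (r.succ, c) k + eV n (st.1 (r, c.succ)) k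
            = st.2 (r.castSucc, c) k + eV n (st.1 (r, c.castSucc)) k) ∧
  (∀ i : Fin n,
    (st.1 (⟨2 * i.val + 1, by have := i.isLt; omega⟩, 0) = mid n ∧
       st.1 (⟨2 * i.val, by have := i.isLt; omega⟩, 0) = mid n) ∨
    (st.1 (⟨2 * i.val + 1, by have := i.isLt; omega⟩, 0) ≠ mid n ∧
      (st.1 (⟨2 * i.val, by have := i.isLt; omega⟩, 0)
          = st.1 (⟨2 * i.val + 1, by have := i.isLt; omega⟩, 0) ∨
       st.1 (⟨2 * i.val, by have := i.isLt; omega⟩, 0)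
          = barC n (st.1 (⟨2 * i.val + 1, by have := i.isLt; omega⟩, 0)))))

/-- For a color `c ∈ [±n]`, the 0-indexed absolute value `|c| - 1 ∈ {0,…,n-1}`
(junk value `n` at `c = 0`). -/
def aIdx (n : ℕ) (c : Col n) : ℕ := if c.val < n then c.val else 2 * n - c.val

/-!
Colors travel along paths: east and up in Γ rows, west and up in Δ rows, and the cap of the
`i`-th pair of rows joins the east end of its Γ row to the east end of its Δ row. By (a) the top
boundary carries exactly the colors `\overline{σ(j)}`, the one of pair `j` in column
`t_j = |μ_{|σ(j)|}| - 1`, and by (b) `t_j` decreases with `j`. Read the lattice from the top, one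
pair of rows at a time: the vertical edges above the pair `i` carry only the `\overline{σ(j)}`
with `j ≥ i`, in columns weakly east of `t_i`. So `σ(i)` does not occur in the Δ row of the pair
or below it; entering the Γ row from the west, it cannot leave upwards and runs along the whole
Γ row to the cap, which must turn it into `\overline{σ(i)}`. That color can only leave the Δ row
upwards in column `t_i`, and nothing is left to occupy the Δ row west of `t_i`. Once the
horizontal edges of a row are known, conservation determines the vertical edges below it.
-/

namespace UTurn

section Balance

/- `x m` counts one color on the horizontal edge at position `m` of a row (position `0` is the
east end), `S c` and `N c` count it on the vertical edges below and above column `c`; `hbal` is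
conservation at a Δ vertex (at a Γ vertex the roles of `c.castSucc` and `c.succ` swap). -/

variable {L p : ℕ} {S N : Fin L → ℕ} {x : Fin (L + 1) → ℕ}

lemma balance_eq_zero_west (hbal : ∀ c, S c + x c.castSucc = N c + x c.succ)
    (hlast : x (Fin.last L) = 0) (hN : ∀ c : Fin L, p ≤ c.val → N c = 0) :
    ∀ m : Fin (L + 1), p ≤ m.val → x m = 0 := by
  refine Fin.reverseInduction (fun _ => hlast) fun c ih hc => ?_
  have := hbal c
  have := ih (by simp only [Fin.val_succ]; simp only [Fin.val_castSucc] at hc; omega)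
  have := hN c hc
  omega

lemma balance_eq_one_east (hbal : ∀ c, S c + x c.castSucc = N c + x c.succ)
    (hle : ∀ m, x m ≤ 1) (hzero : x 0 = 1) (hN : ∀ c : Fin L, c.val < p → N c = 0) :
    ∀ m : Fin (L + 1), m.val ≤ p → x m = 1 := by
  refine Fin.induction (fun _ => hzero) fun c ih hc => ?_
  simp only [Fin.val_succ] at hc
  have := hbal c
  have := ih (by simp only [Fin.val_castSucc]; omega)
  have := hN c (by omega)
  have := hle c.succ
  omega

lemma balance_eq_one_of_last (hbal : ∀ c, S c + x c.succ = N c + x c.castSucc)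
    (hle : ∀ m, x m ≤ 1) (hlast : x (Fin.last L) = 1) (hN : ∀ c, N c = 0) :
    ∀ m, x m = 1 := by
  refine Fin.reverseInduction hlast fun c ih => ?_
  have := hbal c
  have := hN c
  have := hle c.castSucc
  omega

end Balance

variable {n L : ℕ}

lemma eV_le_one (c k : Col n) : eV n c k ≤ 1 := by
  unfold eV; split <;> omega

lemma eV_mid (k : Col n) : eV n (mid n) k = 0 := if_neg fun h => h.1 rfl

lemma eV_self {c : Col n} (h : c ≠ mid n) : eV n c c = 1 := if_pos ⟨h, rfl⟩

lemma eV_of_ne {c k : Col n} (h : k ≠ c) : eV n c k = 0 := if_neg fun h' => h h'.2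

lemma eq_of_eV_eq_one {c k : Col n} (h : eV n c k = 1) : c = k := by
  by_contra hck
  rw [eV_of_ne (Ne.symm hck)] at h
  omega

lemma eq_mid_of_eV_eq_zero {c : Col n} (h : ∀ k, eV n c k = 0) : c = mid n := by
  by_contra hc
  simpa [eV_self hc] using h c

lemma barC_involutive : Function.Involutive (barC n) := fun c => by
  have := c.isLt
  ext; simp only [barC]; omega

lemma barC_mid : barC n (mid n) = mid n := by
  ext; simp only [barC, mid]; omega

lemma barC_ne_mid {c : Col n} (h : c ≠ mid n) : barC n c ≠ mid n := fun h' =>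
  h (by rw [← barC_involutive c, h', barC_mid])

lemma posC_ne_mid (i : Fin n) : posC n i ≠ mid n := by
  simp only [ne_eq, Fin.ext_iff, posC, mid]; omega

lemma aIdx_lt {c : Col n} (h : c ≠ mid n) : aIdx n c < n := by
  have := c.isLt
  have : c.val ≠ n := fun h' => h (Fin.ext h')
  unfold aIdx; split <;> omega

lemma aIdx_barC (c : Col n) : aIdx n (barC n c) = aIdx n c := by
  have := c.isLt
  unfold aIdx; simp only [barC]
  by_cases h₁ : c.val < n <;> by_cases h₂ : 2 * n - c.val < n <;>
    simp only [h₁, h₂, if_true, if_false] <;> omega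

lemma aIdx_posC (i : Fin n) : aIdx n (posC n i) = i.val := if_pos i.isLt

section Perm

variable (σ : Equiv.Perm (Col n)) (μ : Fin n → ℤ)

/-- The color `σ(i)`, entering the Γ row of the `i`-th pair of rows from the west. -/
def inColor (i : Fin n) : Col n := σ (posC n i)

/-- The color `\overline{σ(i)}` into which the cap of the `i`-th pair turns `σ(i)`. -/
def outColor (i : Fin n) : Col n := barC n (inColor σ i)

/-- `|σ(i)|` as an element of `Fin n`; the fallback `i` is junk, reached only if `σ(i) = 0`. -/
def pairIdx (i : Fin n) : Fin n := if h : aIdx n (inColor σ i) < n then ⟨_, h⟩ else i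

/-- The column `|μ_{|σ(i)|}| - 1` where the path of `\overline{σ(i)}` turns up. -/
def turnCol (i : Fin n) : ℕ := (μ (pairIdx σ i)).natAbs - 1

/-- The color entering the top of column `|μ_a| - 1`. -/
def topColor (a : Fin n) : Col n := if 0 < μ a then posC n a else barC n (posC n a)

variable {σ μ} (hσ : ∀ k, σ (barC n k) = barC n (σ k))
include hσ

lemma perm_mid : σ (mid n) = mid n := by
  have h := hσ (mid n)
  rw [barC_mid] at h
  have := (σ (mid n)).isLt
  have hv : (σ (mid n)).val = 2 * n - (σ (mid n)).val := congrArg Fin.val h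
  ext; show _ = n; omega

lemma inColor_ne_mid (i : Fin n) : inColor σ i ≠ mid n := fun h =>
  posC_ne_mid i (σ.injective (h.trans (perm_mid hσ).symm))

lemma outColor_ne_mid (i : Fin n) : outColor σ i ≠ mid n :=
  barC_ne_mid (inColor_ne_mid hσ i)

lemma outColor_eq (i : Fin n) : outColor σ i = σ (barC n (posC n i)) := (hσ _).symm

omit hσ in
lemma inColor_injective : Function.Injective (inColor σ) := fun i j h =>
  have hv : (posC n i).val = (posC n j).val := congrArg Fin.val (σ.injective h)
  Fin.ext hv

omit hσ in
lemma outColor_injective : Function.Injective (outColor σ) := fun _ _ h =>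
  inColor_injective (barC_involutive.injective h)

lemma outColor_ne_inColor (i j : Fin n) : outColor σ i ≠ inColor σ j := by
  rw [outColor_eq hσ]
  intro h
  have := congrArg Fin.val (σ.injective h)
  simp only [barC, posC] at this
  omega

lemma exists_eq_inColor_or_outColor {k : Col n} (hk : k ≠ mid n) :
    ∃ j, k = inColor σ j ∨ k = outColor σ j := by
  obtain ⟨c, rfl⟩ := σ.surjective k
  have hcm : c.val ≠ n := fun h => hk (by rw [show c = mid n from Fin.ext h, perm_mid hσ])
  have := c.isLt
  rcases lt_or_gt_of_ne hcm with h | h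
  · exact ⟨⟨c.val, h⟩, Or.inl rfl⟩
  · refine ⟨⟨2 * n - c.val, by omega⟩, Or.inr ?_⟩
    rw [outColor_eq hσ]
    congr 1; ext; simp only [barC, posC]; omega

lemma pairIdx_val (i : Fin n) : (pairIdx σ i).val = aIdx n (inColor σ i) := by
  unfold pairIdx; rw [dif_pos (aIdx_lt (inColor_ne_mid hσ i))]

lemma aIdx_outColor (i : Fin n) : aIdx n (outColor σ i) = (pairIdx σ i).val := by
  rw [pairIdx_val hσ]; exact aIdx_barC _

lemma pairIdx_bijective : Function.Bijective (pairIdx σ) := by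
  have hsurj : Function.Surjective (pairIdx σ) := fun a => by
    obtain ⟨j, hj | hj⟩ := exists_eq_inColor_or_outColor hσ (posC_ne_mid a)
    · exact ⟨j, Fin.ext (by rw [pairIdx_val hσ, ← hj, aIdx_posC])⟩
    · exact ⟨j, Fin.ext (by rw [← aIdx_outColor hσ, ← hj, aIdx_posC])⟩
  exact ⟨Finite.injective_iff_surjective.mpr hsurj, hsurj⟩

omit hσ in
lemma natAbs_eq_turnCol_add_one (hμ : ∀ j, 1 ≤ |μ j| ∧ |μ j| ≤ (L : ℤ)) (i : Fin n) :
    (μ (pairIdx σ i)).natAbs = turnCol σ μ i + 1 := by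
  have := (hμ (pairIdx σ i)).1
  rw [Int.abs_eq_natAbs] at this
  unfold turnCol; omega

omit hσ in
lemma turnCol_lt (hμ : ∀ j, 1 ≤ |μ j| ∧ |μ j| ≤ (L : ℤ)) (i : Fin n) :
    turnCol σ μ i < L := by
  have := hμ (pairIdx σ i)
  rw [Int.abs_eq_natAbs] at this
  unfold turnCol; omega

lemma topColor_pairIdx
    (ha : ∀ (i : Fin n) (h : aIdx n (σ (posC n i)) < n),
      (σ (posC n i) < mid n → μ ⟨aIdx n (σ (posC n i)), h⟩ < 0) ∧
      (mid n < σ (posC n i) → 0 < μ ⟨aIdx n (σ (posC n i)), h⟩))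
    (j : Fin n) : topColor μ (pairIdx σ j) = outColor σ j := by
  have hj : aIdx n (σ (posC n j)) < n := aIdx_lt (inColor_ne_mid hσ j)
  obtain ⟨hneg, hpos⟩ := ha j hj
  have hv : (inColor σ j).val ≠ n := fun h => inColor_ne_mid hσ j (Fin.ext h)
  have := (inColor σ j).isLt
  rw [show pairIdx σ j = ⟨_, hj⟩ from Fin.ext (pairIdx_val hσ j), topColor]
  rcases lt_or_gt_of_ne hv with h | h
  · rw [if_neg (hneg h).not_gt]
    congr 1; ext; exact if_pos h
  · rw [if_pos (hpos h)]
    ext; exact if_neg h.not_gt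

lemma antitone_turnCol
    (hb : ∀ (i j : Fin n), i ≤ j →
      ∀ (hi : aIdx n (σ (posC n i)) < n) (hj : aIdx n (σ (posC n j)) < n),
        |μ ⟨aIdx n (σ (posC n j)), hj⟩| ≤ |μ ⟨aIdx n (σ (posC n i)), hi⟩|) :
    Antitone (turnCol σ μ) := fun i j hij => by
  have hi : aIdx n (σ (posC n i)) < n := aIdx_lt (inColor_ne_mid hσ i)
  have hj : aIdx n (σ (posC n j)) < n := aIdx_lt (inColor_ne_mid hσ j)
  have h := hb i j hij hi hj
  rw [Int.abs_eq_natAbs, Int.abs_eq_natAbs] at h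
  unfold turnCol
  rw [show pairIdx σ i = ⟨_, hi⟩ from Fin.ext (pairIdx_val hσ i),
    show pairIdx σ j = ⟨_, hj⟩ from Fin.ext (pairIdx_val hσ j)]
  omega

end Perm

/-- The Δ row of the `i`-th pair of rows, the paper's row `2i+1` (pairs are counted from `0`). -/
def deltaRow (i : Fin n) : Fin (2 * n) := ⟨2 * i.val, by omega⟩

/-- The Γ row of the `i`-th pair of rows (the paper's row `2i+2`). -/
def gammaRow (i : Fin n) : Fin (2 * n) := ⟨2 * i.val + 1, by omega⟩

def rowPair (r : Fin (2 * n)) : Fin n := ⟨r.val / 2, by omega⟩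

lemma rowPair_deltaRow (i : Fin n) : rowPair (deltaRow i) = i := by
  ext; simp only [rowPair, deltaRow]; omega

lemma rowPair_gammaRow (i : Fin n) : rowPair (gammaRow i) = i := by
  ext; simp only [rowPair, gammaRow]; omega

lemma deltaRow_mod_two (i : Fin n) : (deltaRow i).val % 2 = 0 := by
  simp only [deltaRow]; omega

lemma gammaRow_mod_two (i : Fin n) : (gammaRow i).val % 2 ≠ 0 := by
  simp only [gammaRow]; omega

lemma exists_eq_deltaRow_or_gammaRow (r : Fin (2 * n)) :
    ∃ i, r = deltaRow i ∨ r = gammaRow i := by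
  refine ⟨rowPair r, ?_⟩
  rcases Nat.mod_two_eq_zero_or_one r.val with h | h
  · left; ext; simp only [deltaRow, rowPair]; omega
  · right; ext; simp only [gammaRow, rowPair]; omega

section State

variable {σ : Equiv.Perm (Col n)} {μ : Fin n → ℤ} {st : St n L}

lemma balance_deltaRow (hA : Adm n L st) (i : Fin n) (c : Fin L) (k : Col n) :
    st.2 ((deltaRow i).succ, c) k + eV n (st.1 (deltaRow i, c.castSucc)) k
      = st.2 ((deltaRow i).castSucc, c) k + eV n (st.1 (deltaRow i, c.succ)) k := by
  have h := hA.1 (deltaRow i) c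
  rw [if_pos (deltaRow_mod_two i)] at h
  exact h k

lemma balance_gammaRow (hA : Adm n L st) (i : Fin n) (c : Fin L) (k : Col n) :
    st.2 ((gammaRow i).succ, c) k + eV n (st.1 (gammaRow i, c.succ)) k
      = st.2 ((gammaRow i).castSucc, c) k + eV n (st.1 (gammaRow i, c.castSucc)) k := by
  have h := hA.1 (gammaRow i) c
  rw [if_neg (gammaRow_mod_two i)] at h
  exact h k

lemma south_eq_of_adm {st' : St n L} (hA : Adm n L st) (hA' : Adm n L st') (r : Fin (2 * n))
    (hrow : ∀ p, st.1 (r, p) = st'.1 (r, p))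
    (hnorth : ∀ c, st.2 (r.castSucc, c) = st'.2 (r.castSucc, c)) (c : Fin L) :
    st.2 (r.succ, c) = st'.2 (r.succ, c) := by
  funext k
  have h := hA.1 r c
  have h' := hA'.1 r c
  simp only [hrow, hnorth] at h
  split_ifs at h h' <;> linarith [h k, h' k]

lemma west_deltaRow (hBC : BC n L σ μ st) (i : Fin n) :
    st.1 (deltaRow i, Fin.last L) = mid n := by
  have h := hBC.1 (deltaRow i)
  rwa [if_pos (deltaRow_mod_two i)] at h

lemma west_gammaRow (hBC : BC n L σ μ st) (i : Fin n) :
    st.1 (gammaRow i, Fin.last L) = inColor σ i := by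
  have h := hBC.1 (gammaRow i)
  rw [if_neg (gammaRow_mod_two i)] at h
  exact h.trans (congrArg (inColor σ) (rowPair_gammaRow i))

end State

section Frozen

variable (σ : Equiv.Perm (Col n)) (μ : Fin n → ℤ)

def frozenDelta (i : Fin n) (p : ℕ) : Col n :=
  if p ≤ turnCol σ μ i then outColor σ i else mid n

def frozenVert (v c : ℕ) : Vec n := fun k =>
  if ∃ j : Fin n, v ≤ 2 * j.val ∧ c = turnCol σ μ j ∧ k = outColor σ j then 1 else 0

/-- The unique admissible state: `σ(i)` runs along the whole Γ row of the `i`-th pair, the cap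
turns it into `\overline{σ(i)}`, which runs back along the Δ row up to column `turnCol i` and
then straight up. -/
def frozenState (L : ℕ) : St n L :=
  (fun rp => if rp.1.val % 2 = 0 then frozenDelta σ μ (rowPair rp.1) rp.2.val
    else inColor σ (rowPair rp.1),
   fun vc => frozenVert σ μ vc.1.val vc.2.val)

variable {σ μ}

lemma frozenState_deltaRow (i : Fin n) (p : Fin (L + 1)) :
    (frozenState σ μ L).1 (deltaRow i, p) = frozenDelta σ μ i p.val := by
  simp only [frozenState, if_pos (deltaRow_mod_two i), rowPair_deltaRow]

lemma frozenState_gammaRow (i : Fin n) (p : Fin (L + 1)) :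
    (frozenState σ μ L).1 (gammaRow i, p) = inColor σ i := by
  simp only [frozenState, if_neg (gammaRow_mod_two i), rowPair_gammaRow]

lemma frozenVert_outColor (v c : ℕ) (j : Fin n) :
    frozenVert σ μ v c (outColor σ j) =
      if v ≤ 2 * j.val ∧ c = turnCol σ μ j then 1 else 0 := by
  refine if_congr ⟨?_, fun h => ⟨j, h.1, h.2, rfl⟩⟩ rfl rfl
  rintro ⟨j', hv, hc, hj⟩
  obtain rfl := outColor_injective hj
  exact ⟨hv, hc⟩

lemma frozenVert_eq_zero {k : Col n} (hk : ∀ j, k ≠ outColor σ j) (v c : ℕ) :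
    frozenVert σ μ v c k = 0 :=
  if_neg fun ⟨j, _, _, hj⟩ => hk j hj

lemma frozenVert_eq_zero_of_turnCol_lt (hanti : Antitone (turnCol σ μ)) {i : Fin n} {v c : ℕ}
    (hv : 2 * i.val ≤ v) (hc : turnCol σ μ i < c) (k : Col n) : frozenVert σ μ v c k = 0 :=
  if_neg fun ⟨j, hj, hcj, _⟩ => by
    have := hanti (show i ≤ j from Fin.le_def.mpr (by omega))
    omega

lemma frozenVert_two_mul_add_one (v c : ℕ) :
    frozenVert σ μ (2 * v + 1) c = frozenVert σ μ (2 * v + 2) c := by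
  funext k
  refine if_congr ⟨?_, ?_⟩ rfl rfl <;>
    exact fun ⟨j, hj, h⟩ => ⟨j, by omega, h⟩

lemma frozenVert_bottom (c : ℕ) (k : Col n) : frozenVert σ μ (2 * n) c k = 0 :=
  if_neg fun ⟨j, hj, _⟩ => by omega

lemma frozenVert_balance (hσ : ∀ k, σ (barC n k) = barC n (σ k)) (i : Fin n) (c : ℕ)
    (k : Col n) :
    frozenVert σ μ (2 * i.val + 1) c k + eV n (frozenDelta σ μ i c) k
      = frozenVert σ μ (2 * i.val) c k + eV n (frozenDelta σ μ i (c + 1)) k := by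
  unfold frozenDelta
  by_cases hk : ∃ j, k = outColor σ j
  · obtain ⟨j, rfl⟩ := hk
    rw [frozenVert_outColor, frozenVert_outColor]
    by_cases hji : j = i
    · subst hji
      split_ifs <;> simp only [eV_self (outColor_ne_mid hσ j), eV_mid] <;> omega
    · have hne : outColor σ j ≠ outColor σ i := fun h => hji (outColor_injective h)
      have : j.val ≠ i.val := fun h => hji (Fin.ext h)
      split_ifs <;> simp only [eV_of_ne hne, eV_mid] <;> omega
  · have hk' : ∀ j, k ≠ outColor σ j := fun j h => hk ⟨j, h⟩
    rw [frozenVert_eq_zero hk', frozenVert_eq_zero hk']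
    split_ifs <;> simp only [eV_of_ne (hk' i), eV_mid]

lemma topV_eq_sum_topColor (hμ : ∀ a, μ a ≠ 0) (c : Fin L) (k : Col n) :
    topV n L μ c k = ∑ a, if (μ a).natAbs = c.val + 1 ∧ k = topColor μ a then 1 else 0 := by
  refine Finset.sum_congr rfl fun a _ => ?_
  have := hμ a
  unfold topColor
  rcases lt_or_gt_of_ne this with h | h
  · have h' : ¬(μ a = (c.val : ℤ) + 1 ∧ k = posC n a) := fun h' => by have := h'.1; omega
    rw [if_neg h.not_gt, if_neg h', zero_add]
    simp only [show μ a = -((c.val : ℤ) + 1) ↔ (μ a).natAbs = c.val + 1 by omega]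
  · have h' : ¬(μ a = -((c.val : ℤ) + 1) ∧ k = barC n (posC n a)) := fun h' => by
      have := h'.1; omega
    rw [if_pos h, if_neg h', add_zero]
    simp only [show μ a = (c.val : ℤ) + 1 ↔ (μ a).natAbs = c.val + 1 by omega]

lemma topV_eq_frozenVert (hσ : ∀ k, σ (barC n k) = barC n (σ k))
    (htop : ∀ j, topColor μ (pairIdx σ j) = outColor σ j)
    (hμ : ∀ j, 1 ≤ |μ j| ∧ |μ j| ≤ (L : ℤ)) (c : Fin L) :
    topV n L μ c = frozenVert σ μ 0 c.val := by
  funext k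
  have hμ0 : ∀ a, μ a ≠ 0 := fun a => abs_pos.mp (lt_of_lt_of_le one_pos (hμ a).1)
  rw [topV_eq_sum_topColor hμ0, ← (pairIdx_bijective hσ).sum_comp]
  simp only [htop, natAbs_eq_turnCol_add_one hμ, add_left_inj]
  unfold frozenVert
  by_cases hex : ∃ j : Fin n, 0 ≤ 2 * j.val ∧ c.val = turnCol σ μ j ∧ k = outColor σ j
  · obtain ⟨j, -, hc, rfl⟩ := hex
    rw [if_pos ⟨j, Nat.zero_le _, hc, rfl⟩, Finset.sum_eq_single j]
    · exact if_pos ⟨hc.symm, rfl⟩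
    · exact fun j' _ hj' => if_neg fun h => hj' (outColor_injective h.2).symm
    · simp
  · rw [if_neg hex]
    exact Finset.sum_eq_zero fun j _ => if_neg fun h => hex ⟨j, Nat.zero_le _, h.1.symm, h.2⟩

lemma frozenState_adm (hσ : ∀ k, σ (barC n k) = barC n (σ k)) :
    Adm n L (frozenState σ μ L) := by
  refine ⟨fun r c => ?_, fun i => Or.inr ⟨?_, Or.inr ?_⟩⟩
  · obtain ⟨i, rfl | rfl⟩ := exists_eq_deltaRow_or_gammaRow r
    · rw [if_pos (deltaRow_mod_two i)]
      intro k
      rw [frozenState_deltaRow, frozenState_deltaRow]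
      exact frozenVert_balance hσ i c k
    · rw [if_neg (gammaRow_mod_two i)]
      intro k
      rw [frozenState_gammaRow, frozenState_gammaRow]
      show frozenVert σ μ (2 * i.val + 2) c k + _ = frozenVert σ μ (2 * i.val + 1) c k + _
      rw [frozenVert_two_mul_add_one]
  · show (frozenState σ μ L).1 (gammaRow i, 0) ≠ mid n
    rw [frozenState_gammaRow]
    exact inColor_ne_mid hσ i
  · show (frozenState σ μ L).1 (deltaRow i, 0) = barC n ((frozenState σ μ L).1 (gammaRow i, 0))
    rw [frozenState_deltaRow, frozenState_gammaRow]
    exact if_pos (Nat.zero_le _)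

lemma frozenState_bc (hσ : ∀ k, σ (barC n k) = barC n (σ k))
    (htop : ∀ j, topColor μ (pairIdx σ j) = outColor σ j)
    (hμ : ∀ j, 1 ≤ |μ j| ∧ |μ j| ≤ (L : ℤ)) : BC n L σ μ (frozenState σ μ L) := by
  refine ⟨fun r => ?_, fun c => (topV_eq_frozenVert hσ htop hμ c).symm,
    fun c => funext (frozenVert_bottom c.val)⟩
  obtain ⟨i, rfl | rfl⟩ := exists_eq_deltaRow_or_gammaRow r
  · rw [if_pos (deltaRow_mod_two i), frozenState_deltaRow]
    exact if_neg (Nat.not_le.mpr (turnCol_lt hμ i))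
  · rw [if_neg (gammaRow_mod_two i), frozenState_gammaRow]
    exact congrArg (inColor σ) (rowPair_gammaRow i).symm

end Frozen

section Uniqueness

variable {σ : Equiv.Perm (Col n)} {μ : Fin n → ℤ} {st : St n L}

lemma deltaRow_absent_of_north (hA : Adm n L st) {i : Fin n}
    (hW : st.1 (deltaRow i, Fin.last L) = mid n) {k : Col n}
    (hk : ∀ c, st.2 ((deltaRow i).castSucc, c) k = 0) :
    (∀ p, eV n (st.1 (deltaRow i, p)) k = 0) ∧ ∀ c, st.2 ((deltaRow i).succ, c) k = 0 := by
  have hx := balance_eq_zero_west (x := fun p => eV n (st.1 (deltaRow i, p)) k) (p := 0)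
    (balance_deltaRow hA i · k) (by rw [hW, eV_mid]) fun c _ => hk c
  refine ⟨fun p => hx p (Nat.zero_le _), fun c => ?_⟩
  have := balance_deltaRow hA i c k
  have := hx c.castSucc (Nat.zero_le _)
  have := hx c.succ (Nat.zero_le _)
  have := hk c
  omega

lemma gammaRow_eq_of_north (hA : Adm n L st) {i : Fin n} {γ : Col n}
    (hW : st.1 (gammaRow i, Fin.last L) = γ) (hγ : γ ≠ mid n)
    (hk : ∀ c, st.2 ((gammaRow i).castSucc, c) γ = 0) (p : Fin (L + 1)) :
    st.1 (gammaRow i, p) = γ :=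
  eq_of_eV_eq_one <| balance_eq_one_of_last (x := fun p => eV n (st.1 (gammaRow i, p)) γ)
    (balance_gammaRow hA i · γ) (fun _ => eV_le_one _ _) (by rw [hW, eV_self hγ]) hk p

lemma deltaRow_east_eq (hA : Adm n L st) {i : Fin n} {γ : Col n}
    (hG : st.1 (gammaRow i, 0) = γ) (hγ : γ ≠ mid n)
    (hD : eV n (st.1 (deltaRow i, 0)) γ = 0) :
    st.1 (deltaRow i, 0) = barC n γ := by
  rcases hA.2 i with ⟨h, -⟩ | ⟨-, h | h⟩
  · exact absurd (hG.symm.trans h) hγ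
  · have h' : st.1 (deltaRow i, 0) = γ := h.trans hG
    rw [h', eV_self hγ] at hD
    exact absurd hD one_ne_zero
  · exact h.trans (congrArg (barC n) hG)

lemma deltaRow_eq_frozenDelta (hσ : ∀ k, σ (barC n k) = barC n (σ k))
    (hanti : Antitone (turnCol σ μ)) (hA : Adm n L st) {i : Fin n}
    (hW : st.1 (deltaRow i, Fin.last L) = mid n) (hE : st.1 (deltaRow i, 0) = outColor σ i)
    (hN : ∀ c k, st.2 ((deltaRow i).castSucc, c) k = frozenVert σ μ (2 * i.val) c.val k)
    (p : Fin (L + 1)) : st.1 (deltaRow i, p) = frozenDelta σ μ i p.val := by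
  unfold frozenDelta
  split_ifs with hp
  · refine eq_of_eV_eq_one <| balance_eq_one_east
      (x := fun p => eV n (st.1 (deltaRow i, p)) (outColor σ i)) (p := turnCol σ μ i)
      (balance_deltaRow hA i · _) (fun _ => eV_le_one _ _) ?_ (fun c hc => ?_) p hp
    · rw [hE, eV_self (outColor_ne_mid hσ i)]
    · rw [hN, frozenVert_outColor, if_neg (by omega)]
  · refine eq_mid_of_eV_eq_zero fun k => balance_eq_zero_west
      (x := fun p => eV n (st.1 (deltaRow i, p)) k) (p := turnCol σ μ i + 1)
      (balance_deltaRow hA i · k) (by rw [hW, eV_mid]) (fun c hc => ?_) p (by omega)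
    rw [hN]
    exact frozenVert_eq_zero_of_turnCol_lt hanti le_rfl (by omega) k

lemma pair_rows_eq_frozenState (hσ : ∀ k, σ (barC n k) = barC n (σ k))
    (hanti : Antitone (turnCol σ μ)) (hA : Adm n L st) (hBC : BC n L σ μ st) (i : Fin n)
    (hN : ∀ c,
      st.2 ((deltaRow i).castSucc, c) = (frozenState σ μ L).2 ((deltaRow i).castSucc, c)) :
    (∀ p, st.1 (deltaRow i, p) = (frozenState σ μ L).1 (deltaRow i, p)) ∧
      ∀ p, st.1 (gammaRow i, p) = (frozenState σ μ L).1 (gammaRow i, p) := by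
  have hN' : ∀ c k, st.2 ((deltaRow i).castSucc, c) k = frozenVert σ μ (2 * i.val) c.val k :=
    fun c k => congrFun (hN c) k
  obtain ⟨hDin, hSin⟩ :=
    deltaRow_absent_of_north hA (west_deltaRow hBC i) (k := inColor σ i) fun c => (hN' c _).trans
      (frozenVert_eq_zero (fun j => (outColor_ne_inColor hσ j i).symm) _ _)
  have hG := gammaRow_eq_of_north hA (west_gammaRow hBC i) (inColor_ne_mid hσ i) hSin
  have hE := deltaRow_east_eq hA (hG 0) (inColor_ne_mid hσ i) (hDin 0)
  refine ⟨fun p => ?_, fun p => ?_⟩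
  · rw [frozenState_deltaRow]
    exact deltaRow_eq_frozenDelta hσ hanti hA (west_deltaRow hBC i) hE hN' p
  · rw [frozenState_gammaRow]
    exact hG p

lemma eq_frozenState (hσ : ∀ k, σ (barC n k) = barC n (σ k)) (hanti : Antitone (turnCol σ μ))
    (htop : ∀ j, topColor μ (pairIdx σ j) = outColor σ j)
    (hμ : ∀ j, 1 ≤ |μ j| ∧ |μ j| ≤ (L : ℤ)) (hA : Adm n L st) (hBC : BC n L σ μ st) :
    st = frozenState σ μ L := by
  have hAf : Adm n L (frozenState σ μ L) := frozenState_adm hσ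
  have htop' : ∀ c, st.2 (0, c) = (frozenState σ μ L).2 (0, c) := fun c =>
    (hBC.2.1 c).trans ((frozenState_bc hσ htop hμ).2.1 c).symm
  have hnorth : ∀ i : Fin n, ∀ c,
      st.2 ((deltaRow i).castSucc, c) = (frozenState σ μ L).2 ((deltaRow i).castSucc, c) := by
    rintro ⟨i, hi⟩
    induction i with
    | zero => exact htop'
    | succ i ih =>
      have ih := ih (by omega)
      have hrows := pair_rows_eq_frozenState hσ hanti hA hBC _ ih
      exact south_eq_of_adm hA hAf _ hrows.2 (south_eq_of_adm hA hAf _ hrows.1 ih)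
  have hrows : ∀ r p, st.1 (r, p) = (frozenState σ μ L).1 (r, p) := by
    intro r
    obtain ⟨i, hi⟩ := exists_eq_deltaRow_or_gammaRow r
    have h := pair_rows_eq_frozenState hσ hanti hA hBC i (hnorth i)
    rcases hi with rfl | rfl
    exacts [h.1, h.2]
  have hlevels : ∀ v c, st.2 (v, c) = (frozenState σ μ L).2 (v, c) :=
    Fin.induction htop' fun r ih => south_eq_of_adm hA hAf r (hrows r) ih
  exact Prod.ext (funext fun ⟨r, p⟩ => hrows r p) (funext fun ⟨v, c⟩ => hlevels v c)

end Uniqueness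

end UTurn

theorem unique_admissible_state_general (n L : ℕ)
    (σ : Equiv.Perm (Col n)) (hσ : ∀ k, σ (barC n k) = barC n (σ k))
    (μ : Fin n → ℤ) (hμ : ∀ j, 1 ≤ |μ j| ∧ |μ j| ≤ (L : ℤ))
    (ha : ∀ (i : Fin n) (h : aIdx n (σ (posC n i)) < n),
      (σ (posC n i) < mid n → μ ⟨aIdx n (σ (posC n i)), h⟩ < 0) ∧
      (mid n < σ (posC n i) → 0 < μ ⟨aIdx n (σ (posC n i)), h⟩))
    (hb : ∀ (i j : Fin n), i ≤ j →
      ∀ (hi : aIdx n (σ (posC n i)) < n) (hj : aIdx n (σ (posC n j)) < n),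
        |μ ⟨aIdx n (σ (posC n j)), hj⟩| ≤ |μ ⟨aIdx n (σ (posC n i)), hi⟩|) :
    ∃! st : St n L, BC n L σ μ st ∧ Adm n L st := by
  have htop := UTurn.topColor_pairIdx hσ ha
  have hanti := UTurn.antitone_turnCol hσ hb
  refine ⟨UTurn.frozenState σ μ L,
    ⟨UTurn.frozenState_bc hσ htop hμ, UTurn.frozenState_adm hσ⟩, ?_⟩
  rintro st ⟨hBC, hA⟩
  exact UTurn.eq_frozenState hσ hanti htop hμ hA hBC

/-- uniqueness of the admissible state for frozen boundary
conditions: if for each `i` the signs of `σ(i)` and `μ_{|σ(i)|}` are opposite,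
and `|μ_{|σ(1)|}| ≥ ⋯ ≥ |μ_{|σ(n)|}|`, then the model with boundary data
`(σ, μ)` has exactly one admissible state. -/
theorem unique_admissible_state (n L : ℕ) (hn : 0 < n) (hL : 0 < L)
    (σ : Equiv.Perm (Col n)) (hσ : ∀ k, σ (barC n k) = barC n (σ k))
    (μ : Fin n → ℤ) (hμ : ∀ j, 1 ≤ |μ j| ∧ |μ j| ≤ (L : ℤ))
    (ha : ∀ (i : Fin n) (h : aIdx n (σ (posC n i)) < n),
      (σ (posC n i) < mid n → μ ⟨aIdx n (σ (posC n i)), h⟩ < 0) ∧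
      (mid n < σ (posC n i) → 0 < μ ⟨aIdx n (σ (posC n i)), h⟩))
    (hb : ∀ (i j : Fin n), i ≤ j →
      ∀ (hi : aIdx n (σ (posC n i)) < n) (hj : aIdx n (σ (posC n j)) < n),
        |μ ⟨aIdx n (σ (posC n j)), hj⟩| ≤ |μ ⟨aIdx n (σ (posC n i)), hi⟩|) :
    ∃! st : St n L, BC n L σ μ st ∧ Adm n L st :=
  unique_admissible_state_general n L σ hσ μ hμ ha hb
end
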